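/- Let p ≥ 1 be an integer, z = 4p − 1, G any group, s ∈ G, and let c, σ : ℤ/zℤ → G satisfy, for every i ∈ ℤ/zℤ, both σ(i) = s · c(i − 1 + 2p) · c(i + p) and σ(i) = c(i) · c(i − p) · s⁻¹. If moreover the ordered product (σ(1)·σ(1))·(σ(2)·σ(2))···(σ(z)·σ(z)) = 1, then the ordered product over i = 1, …, z of the factors c(i) · c(i − p) · c(i − 1 + 2p) · c(i + p) equals 1. -/
import Mathlib

theorem cobweb_product_relation_4p_sub_one {G : Type*} [Group G] (p : ℕ) (hp : 1 ≤ p)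
    (z : ℕ) (hz : z = 4 * p - 1) (s : G) (c σ : ZMod z → G)
    (h1 : ∀ i : ZMod z, σ i = s * c (i - 1 + 2 * (p : ZMod z)) * c (i + (p : ZMod z)))
    (h2 : ∀ i : ZMod z, σ i = c i * c (i - (p : ZMod z)) * s⁻¹)
    (hprod : ((List.range z).map (fun k =>
        σ ((k + 1 : ℕ) : ZMod z) * σ ((k + 1 : ℕ) : ZMod z))).prod = 1) :
    ((List.range z).map (fun k =>
        c ((k + 1 : ℕ) : ZMod z) * c (((k + 1 : ℕ) : ZMod z) - (p : ZMod z)) *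
        c (((k + 1 : ℕ) : ZMod z) - 1 + 2 * (p : ZMod z)) *
        c (((k + 1 : ℕ) : ZMod z) + (p : ZMod z)))).prod = 1 := by
  rw [← hprod]
  congr 1
  congr 1
  funext k
  set i : ZMod z := ((k + 1 : ℕ) : ZMod z)
  nth_rewrite 1 [h2 i]
  rw [h1 i]
  group
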